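/- Key validity of the SSNF definitional translation: for every FOSL formula ψ, the formulas (L_ψ ∧ ψ⁺) → ψ and (¬L_ψ ∧ ψ⁻) → ¬ψ are valid (true in every standpoint structure at every precisification under every assignment), where the definitional conjuncts ψ⁺, ψ⁻ occur outside all modal operators and hence hold at all precisifications whenever they hold at one. -/
import Mathlib


namespace FOSL

/-- Standpoint expressions: e ::= * | s | e∪e | e∩e | e∖e -/
inductive SE (S : Type) : Type
  | star : SE S
  | sym : S → SE S
  | union : SE S → SE S → SE S
  | inter : SE S → SE S → SE S
  | diff : SE S → SE S → SE S

/-- FOSL formulas over predicates `P` (with arities `ar`), constants `C`,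
standpoint symbols `S`; variables are natural numbers. -/
inductive Fm (P : Type) (ar : P → ℕ) (C : Type) (S : Type) : Type
  | atom : (p : P) → (Fin (ar p) → C ⊕ ℕ) → Fm P ar C S
  | eq : (C ⊕ ℕ) → (C ⊕ ℕ) → Fm P ar C S
  | neg : Fm P ar C S → Fm P ar C S
  | conj : Fm P ar C S → Fm P ar C S → Fm P ar C S
  | all : ℕ → Fm P ar C S → Fm P ar C S
  | box : SE S → Fm P ar C S → Fm P ar C S

variable {P : Type} {ar : P → ℕ} {C S : Type}

def Fm.disj (φ ψ : Fm P ar C S) : Fm P ar C S := .neg (.conj (.neg φ) (.neg ψ))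
def Fm.impl (φ ψ : Fm P ar C S) : Fm P ar C S := .neg (.conj φ (.neg ψ))
def Fm.ex (x : ℕ) (φ : Fm P ar C S) : Fm P ar C S := .neg (.all x (.neg φ))
def Fm.dia (e : SE S) (φ : Fm P ar C S) : Fm P ar C S := .neg (.box e (.neg φ))

/-- First-order standpoint structures (constant domain, rigid constants). -/
structure Model (P : Type) (ar : P → ℕ) (C : Type) (S : Type) : Type 1 where
  Dom : Type
  dom_ne : Nonempty Dom
  Prec : Type
  prec_ne : Nonempty Prec
  σ : S → Set Prec
  interpP : Prec → (p : P) → (Fin (ar p) → Dom) → Prop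
  interpC : C → Dom

/-- Homomorphic extension of σ to standpoint expressions, with σ(*) = Π. -/
def Model.σE (M : Model P ar C S) : SE S → Set M.Prec
  | .star => Set.univ
  | .sym s => M.σ s
  | .union e1 e2 => M.σE e1 ∪ M.σE e2
  | .inter e1 e2 => M.σE e1 ∩ M.σE e2
  | .diff e1 e2 => M.σE e1 \ M.σE e2

def Model.termVal (M : Model P ar C S) (v : ℕ → M.Dom) : C ⊕ ℕ → M.Dom
  | .inl c => M.interpC c
  | .inr x => v x

/-- Satisfaction `M, π, v ⊨ φ`. -/
def Model.sat (M : Model P ar C S) : M.Prec → (ℕ → M.Dom) → Fm P ar C S → Prop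
  | π, v, .atom p ts => M.interpP π p fun i => M.termVal v (ts i)
  | _, v, .eq t1 t2 => M.termVal v t1 = M.termVal v t2
  | π, v, .neg φ => ¬ M.sat π v φ
  | π, v, .conj φ ψ => M.sat π v φ ∧ M.sat π v ψ
  | π, v, .all x φ => ∀ δ : M.Dom, M.sat π (Function.update v x δ) φ
  | _, v, .box e φ => ∀ π' ∈ M.σE e, M.sat π' v φ

/-- `M ⊨ φ`: satisfaction at all precisifications and assignments. -/
def Model.satM (M : Model P ar C S) (φ : Fm P ar C S) : Prop :=
  ∀ (π : M.Prec) (v : ℕ → M.Dom), M.sat π v φ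

def tmVars : C ⊕ ℕ → Finset ℕ
  | .inl _ => ∅
  | .inr x => {x}

/-- Free variables. -/
def Fm.fv : Fm P ar C S → Finset ℕ
  | .atom _ ts => Finset.univ.biUnion fun i => tmVars (ts i)
  | .eq t1 t2 => tmVars t1 ∪ tmVars t2
  | .neg φ => φ.fv
  | .conj φ ψ => φ.fv ∪ ψ.fv
  | .all x φ => φ.fv.erase x
  | .box _ φ => φ.fv

/-- Sentential: in every subformula □_e ψ, ψ has no free variables. -/
def Fm.sentential : Fm P ar C S → Prop
  | .atom _ _ => True
  | .eq _ _ => True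
  | .neg φ => φ.sentential
  | .conj φ ψ => φ.sentential ∧ ψ.sentential
  | .all _ φ => φ.sentential
  | .box _ φ => φ.fv = ∅ ∧ φ.sentential

/-- Set of subformulas. -/
def Fm.Sub : Fm P ar C S → Set (Fm P ar C S)
  | .atom p ts => {.atom p ts}
  | .eq t1 t2 => {.eq t1 t2}
  | .neg φ => insert (.neg φ) φ.Sub
  | .conj φ ψ => insert (.conj φ ψ) (φ.Sub ∪ ψ.Sub)
  | .all x φ => insert (.all x φ) φ.Sub
  | .box e φ => insert (.box e φ) φ.Sub

/-- |φ| = number of subformulas of φ. -/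
noncomputable def Fm.size (φ : Fm P ar C S) : ℕ := φ.Sub.ncard

def satisfiable (φ : Fm P ar C S) : Prop := ∃ M : Model P ar C S, M.satM φ

/-- n-satisfiable: has a model with exactly n precisifications. -/
def nsatisfiable (n : ℕ) (φ : Fm P ar C S) : Prop :=
  ∃ M : Model P ar C S, M.satM φ ∧ Nat.card M.Prec = n

def Fm.boxfree : Fm P ar C S → Prop
  | .atom _ _ => True
  | .eq _ _ => True
  | .neg φ => φ.boxfree
  | .conj φ ψ => φ.boxfree ∧ ψ.boxfree
  | .all _ φ => φ.boxfree
  | .box _ _ => False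

/-- Standpoint standard normal form: no nested modalities. -/
def Fm.ssnf : Fm P ar C S → Prop
  | .atom _ _ => True
  | .eq _ _ => True
  | .neg φ => φ.ssnf
  | .conj φ ψ => φ.ssnf ∧ ψ.ssnf
  | .all _ φ => φ.ssnf
  | .box _ φ => φ.boxfree

/-- Restriction of a standpoint structure to a nonempty subset of precisifications. -/
def Model.restrict (M : Model P ar C S) (Ps : Set M.Prec) (h : Ps.Nonempty) :
    Model P ar C S where
  Dom := M.Dom
  dom_ne := M.dom_ne
  Prec := Ps
  prec_ne := h.to_subtype
  σ := fun s => {π : Ps | (π : M.Prec) ∈ M.σ s}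
  interpP := fun π => M.interpP π
  interpC := M.interpC

/-! ### Plain first-order logic -/

inductive FO (Q : Type) (arQ : Q → ℕ) (C : Type) : Type
  | tt
  | atom (q : Q) (ts : Fin (arQ q) → C ⊕ ℕ)
  | eq (t1 t2 : C ⊕ ℕ)
  | neg (φ : FO Q arQ C)
  | conj (φ ψ : FO Q arQ C)
  | all (x : ℕ) (φ : FO Q arQ C)

variable {Q : Type} {arQ : Q → ℕ}

def FO.impl (φ ψ : FO Q arQ C) : FO Q arQ C := .neg (.conj φ (.neg ψ))

def FO.conjList : List (FO Q arQ C) → FO Q arQ C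
  | [] => .tt
  | φ :: l => .conj φ (FO.conjList l)

structure FOModel (Q : Type) (arQ : Q → ℕ) (C : Type) : Type 1 where
  Dom : Type
  dom_ne : Nonempty Dom
  interp : (q : Q) → (Fin (arQ q) → Dom) → Prop
  interpC : C → Dom

def FOModel.termVal (I : FOModel Q arQ C) (v : ℕ → I.Dom) : C ⊕ ℕ → I.Dom
  | .inl c => I.interpC c
  | .inr x => v x

def FOModel.sat (I : FOModel Q arQ C) : (ℕ → I.Dom) → FO Q arQ C → Prop
  | _, .tt => True
  | v, .atom q ts => I.interp q fun i => I.termVal v (ts i)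
  | v, .eq t1 t2 => I.termVal v t1 = I.termVal v t2
  | v, .neg φ => ¬ I.sat v φ
  | v, .conj φ ψ => I.sat v φ ∧ I.sat v ψ
  | v, .all x φ => ∀ δ : I.Dom, I.sat (Function.update v x δ) φ

def FOModel.satM (I : FOModel Q arQ C) (φ : FO Q arQ C) : Prop := ∀ v, I.sat v φ

def fosatisfiable (φ : FO Q arQ C) : Prop := ∃ I : FOModel Q arQ C, I.satM φ

/-! ### Translation to plain FO -/

/-- Translated vocabulary: a predicate P_π for each P and π, and nullary
predicates s_π (for `some s`) and *_π (for `none`). -/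
abbrev TQ (P S Pre : Type) : Type := (P × Pre) ⊕ (Option S × Pre)

def tAr (ar : P → ℕ) {S Pre : Type} : TQ P S Pre → ℕ
  | .inl (p, _) => ar p
  | .inr _ => 0

variable {Pre : Type}

/-- trans_E(π, e). -/
def transE (π : Pre) : SE S → FO (TQ P S Pre) (tAr ar) C
  | .star => .atom (.inr (none, π)) Fin.elim0
  | .sym s => .atom (.inr (some s, π)) Fin.elim0
  | .union e1 e2 => .neg (.conj (.neg (transE π e1)) (.neg (transE π e2)))
  | .inter e1 e2 => .conj (transE π e1) (transE π e2)
  | .diff e1 e2 => .conj (transE π e1) (.neg (transE π e2))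

/-- trans_n(π, φ). -/
noncomputable def transF [Fintype Pre] (π : Pre) : Fm P ar C S → FO (TQ P S Pre) (tAr ar) C
  | .atom p ts => .atom (.inl (p, π)) ts
  | .eq t1 t2 => .eq t1 t2
  | .neg φ => .neg (transF π φ)
  | .conj φ ψ => .conj (transF π φ) (transF π ψ)
  | .all x φ => .all x (transF π φ)
  | .box e φ =>
      FO.conjList ((Finset.univ.toList).map fun π' : Pre =>
        FO.impl (transE π' e) (transF π' φ))

/-- Trans_n(φ) = ⋀_π trans_n(π, φ) ∧ ⋀_π *_π. -/
noncomputable def TransN [Fintype Pre] (φ : Fm P ar C S) : FO (TQ P S Pre) (tAr ar) C :=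
  .conj (FO.conjList ((Finset.univ.toList).map fun π : Pre => transF π φ))
        (FO.conjList ((Finset.univ.toList).map fun π : Pre =>
          FO.atom (.inr (none, π)) Fin.elim0))

/-- The plain first-order structure I_M associated with a standpoint structure M. -/
def Model.toFO (M : Model P ar C S) : FOModel (TQ P S M.Prec) (tAr ar) C where
  Dom := M.Dom
  dom_ne := M.dom_ne
  interp := fun q => match q with
    | .inl (p, π) => fun args => M.interpP π p args
    | .inr (none, _) => fun _ => True
    | .inr (some s, π) => fun _ => π ∈ M.σ s
  interpC := M.interpC


/-! ### The structure-preserving SSNF transformation -/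

/-- Extended predicate vocabulary: original predicates plus a fresh predicate
P_ψ for each formula ψ. -/
abbrev EP (P : Type) (ar : P → ℕ) (C S : Type) : Type := P ⊕ Fm P ar C S

/-- Arity of the extended vocabulary: P_ψ has as arity the number of free
variables of ψ. -/
def eAr (ar : P → ℕ) : EP P ar C S → ℕ
  | .inl p => ar p
  | .inr ψ => ψ.fv.card

/-- Embedding of formulas into the extended vocabulary. -/
def Fm.lift : Fm P ar C S → Fm (EP P ar C S) (eAr ar) C S
  | .atom p ts => .atom (.inl p) ts
  | .eq t1 t2 => .eq t1 t2
  | .neg φ => .neg φ.lift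
  | .conj φ ψ => .conj φ.lift ψ.lift
  | .all x φ => .all x φ.lift
  | .box e φ => .box e φ.lift

/-- The fresh atom P_ψ(x₁,…,x_m) applied to the free variables of ψ. -/
noncomputable def freshAtom (ψ : Fm P ar C S) : Fm (EP P ar C S) (eAr ar) C S :=
  .atom (.inr ψ) (fun i => Sum.inr ((ψ.fv.sort (· ≤ ·)).get
    (Fin.cast (by simp : ψ.fv.card = (ψ.fv.sort (· ≤ ·)).length) i)))

/-- The label L_ψ: the atom itself for literals, ¬L_ξ for ψ = ¬ξ, and the
fresh atom P_ψ(x₁,…,x_m) otherwise. -/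
noncomputable def L : Fm P ar C S → Fm (EP P ar C S) (eAr ar) C S
  | .neg ξ => .neg (L ξ)
  | .atom p ts => .atom (.inl p) ts
  | .eq t1 t2 => .eq t1 t2
  | ψ => freshAtom ψ

/-- A valid formula (verum) in the extended vocabulary. -/
def verum : Fm (EP P ar C S) (eAr ar) C S := .eq (Sum.inr 0) (Sum.inr 0)

mutual
/-- Positive definitional translation ψ⁺. -/
noncomputable def pos : Fm P ar C S → Fm (EP P ar C S) (eAr ar) C S
  | .atom _ _ => verum
  | .eq _ _ => verum
  | .neg ψ => negt ψ
  | .conj ψ ξ => .conj (Fm.impl (L (.conj ψ ξ)) (.conj (L ψ) (L ξ)))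
      (.conj (pos ψ) (pos ξ))
  | .all x ψ => .conj (Fm.impl (L (.all x ψ)) (.all x (L ψ))) (pos ψ)
  | .box e ψ => .conj (Fm.impl (L (.box e ψ)) (.box e (L ψ))) (pos ψ)

/-- Negative definitional translation ψ⁻. -/
noncomputable def negt : Fm P ar C S → Fm (EP P ar C S) (eAr ar) C S
  | .atom _ _ => verum
  | .eq _ _ => verum
  | .neg ψ => pos ψ
  | .conj ψ ξ => .conj (Fm.impl (.conj (L ψ) (L ξ)) (L (.conj ψ ξ)))
      (.conj (negt ψ) (negt ξ))
  | .all x ψ => .conj (Fm.impl (.all x (L ψ)) (L (.all x ψ))) (negt ψ)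
  | .box e ψ => .conj (Fm.impl (.box e (L ψ)) (L (.box e ψ))) (negt ψ)
end

/-- Key validity of the SSNF definitional translation: with ψ⁺ (resp. ψ⁻)
read as a global assumption (holding at all precisifications and assignments),
(L_ψ ∧ ψ⁺) → ψ and (¬L_ψ ∧ ψ⁻) → ¬ψ hold in every standpoint structure at
every precisification under every assignment. -/
theorem definitional_translation_valid (P : Type) (ar : P → ℕ) (C S : Type)
    (ψ : Fm P ar C S) (M : Model (EP P ar C S) (eAr ar) C S) :
    ((∀ (π : M.Prec) (v : ℕ → M.Dom), M.sat π v (pos ψ)) →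
      ∀ (π : M.Prec) (v : ℕ → M.Dom), M.sat π v (L ψ) → M.sat π v ψ.lift) ∧
    ((∀ (π : M.Prec) (v : ℕ → M.Dom), M.sat π v (negt ψ)) →
      ∀ (π : M.Prec) (v : ℕ → M.Dom), ¬ M.sat π v (L ψ) → ¬ M.sat π v ψ.lift) := by
  induction ψ with
  | atom p ts =>
      constructor
      · intro _ π v h; exact h
      · intro _ π v h; exact h
  | eq t1 t2 =>
      constructor
      · intro _ π v h; exact h
      · intro _ π v h; exact h
  | neg φ ih =>
      constructor
      · intro hglob π v hL
        simp only [Fm.lift, Model.sat]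
        have hL' : ¬ M.sat π v (L φ) := by simpa [L, Model.sat] using hL
        exact ih.2 hglob π v hL'
      · intro hglob π v hL
        have hL' : M.sat π v (L φ) := by
          simp only [L, Model.sat, not_not] at hL; exact hL
        simp only [Fm.lift, Model.sat, not_not]
        exact ih.1 hglob π v hL'
  | conj φ ξ ihφ ihξ =>
      constructor
      · intro hglob π v hL
        have h1 := fun π v => (hglob π v).1
        have h2 := fun π v => (hglob π v).2.1
        have h3 := fun π v => (hglob π v).2.2
        have himp := h1 π v
        simp only [Fm.impl, Model.sat] at himp
        push_neg at himp
        have := himp hL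
        exact ⟨ihφ.1 h2 π v this.1, ihξ.1 h3 π v this.2⟩
      · intro hglob π v hL
        have h1 := fun π v => (hglob π v).1
        have h2 := fun π v => (hglob π v).2.1
        have h3 := fun π v => (hglob π v).2.2
        have himp := h1 π v
        simp only [Fm.impl, Model.sat] at himp
        push_neg at himp
        intro hc
        have hφ : M.sat π v (L φ) := by
          by_contra h; exact (ihφ.2 h2 π v h) hc.1
        have hξ2 : M.sat π v (L ξ) := by
          by_contra h; exact (ihξ.2 h3 π v h) hc.2
        exact hL (himp ⟨hφ, hξ2⟩)
  | all x φ ih =>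
      constructor
      · intro hglob π v hL
        have h1 := fun π v => (hglob π v).1
        have h2 := fun π v => (hglob π v).2
        have himp := h1 π v
        simp only [Fm.impl, Model.sat] at himp
        push_neg at himp
        intro δ
        exact ih.1 h2 π _ (himp hL δ)
      · intro hglob π v hL
        have h1 := fun π v => (hglob π v).1
        have h2 := fun π v => (hglob π v).2
        have himp := h1 π v
        simp only [Fm.impl, Model.sat] at himp
        push_neg at himp
        intro hc
        exact hL (himp fun δ => by
          by_contra h
          exact (ih.2 h2 π _ h) (hc δ))
  | box e φ ih =>
      constructor
      · intro hglob π v hL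
        have h1 := fun π v => (hglob π v).1
        have h2 := fun π v => (hglob π v).2
        have himp := h1 π v
        simp only [Fm.impl, Model.sat] at himp
        push_neg at himp
        intro π' hπ'
        exact ih.1 h2 π' v (himp hL π' hπ')
      · intro hglob π v hL
        have h1 := fun π v => (hglob π v).1
        have h2 := fun π v => (hglob π v).2
        have himp := h1 π v
        simp only [Fm.impl, Model.sat] at himp
        push_neg at himp
        intro hc
        exact hL (himp fun π' hπ' => by
          by_contra h
          exact (ih.2 h2 π' v h) (hc π' hπ'))

end FOSL
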